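/- arXiv:2410.08538 — 2 statements merged into one kernel-verified Lean document; each statement's English description precedes it below -/
import Mathlib

section
/- Let γ(n) be defined by γ(1) = 1 and (n+1)γ(n+1) = (1/2)γ(n) + Σ_{p≥1, 2p≤n} (|B_{2p}|/(2p)!) Σ_{k_1,...,k_{2p}>0, k_1+...+k_{2p}=n} γ(k_1)⋯γ(k_{2p}), where B_{2p} are the Bernoulli numbers. Then γ(n) ≥ 0 for all n ≥ 1. -/
/-- The set of compositions of `n` into `m` positive parts, as a `Finset` of functions
`Fin m → ℕ`. -/
def comps (m n : ℕ) : Finset (Fin m → ℕ) :=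
  (Finset.Iic (fun _ => n : Fin m → ℕ)).filter
    (fun k => (∀ i, 0 < k i) ∧ ∑ i, k i = n)

/-- Let `γ(1) = 1` and
`(n+1)γ(n+1) = (1/2)γ(n) + Σ_{p≥1, 2p≤n} (|B_{2p}|/(2p)!) Σ_{k₁+⋯+k_{2p}=n, kᵢ>0} γ(k₁)⋯γ(k_{2p})`,
where `B_{2p}` are the Bernoulli numbers.  Then `γ(n) ≥ 0` for all `n ≥ 1`. -/
theorem stmt_4 (γ : ℕ → ℝ) (h1 : γ 1 = 1)
    (hrec : ∀ n : ℕ, 1 ≤ n →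
      ((n : ℝ) + 1) * γ (n + 1) =
        (1 / 2) * γ n +
          ∑ p ∈ Finset.Icc 1 (n / 2),
            |((bernoulli (2 * p) : ℚ) : ℝ)| / (Nat.factorial (2 * p) : ℝ) *
              ∑ k ∈ comps (2 * p) n, ∏ i, γ (k i)) :
    ∀ n : ℕ, 1 ≤ n → 0 ≤ γ n := by
  intro n hn
  induction n using Nat.strong_induction_on with
  | _ n ih =>
    match n, hn with
    | 1, _ => simp [h1]
    | (m+2), _ =>
      have hm : 1 ≤ m + 1 := Nat.le_add_left 1 m
      have hrec' := hrec (m + 1) hm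
      have ihs : ∀ k, 1 ≤ k → k ≤ m + 1 → 0 ≤ γ k := fun k h1k h2k =>
        ih k (by omega) h1k
      have hRHS : 0 ≤ (1 / 2) * γ (m + 1) +
          ∑ p ∈ Finset.Icc 1 ((m + 1) / 2),
            |((bernoulli (2 * p) : ℚ) : ℝ)| / (Nat.factorial (2 * p) : ℝ) *
              ∑ k ∈ comps (2 * p) (m + 1), ∏ i, γ (k i) := by
        apply add_nonneg
        · exact mul_nonneg (by norm_num) (ihs _ hm le_rfl)
        · apply Finset.sum_nonneg
          intro p hp
          apply mul_nonneg (by positivity)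
          apply Finset.sum_nonneg
          intro k hk
          simp only [comps, Finset.mem_filter] at hk
          apply Finset.prod_nonneg
          intro i _
          refine ihs _ (hk.2.1 i) ?_
          calc k i ≤ ∑ j, k j := Finset.single_le_sum (fun j _ => Nat.zero_le _)
                      (Finset.mem_univ i)
            _ = m + 1 := hk.2.2
      rw [← hrec'] at hRHS
      have hpos : (0 : ℝ) < ((m + 1 : ℕ) : ℝ) + 1 := by positivity
      exact nonneg_of_mul_nonneg_right hRHS hpos
end

section
/- Let (z(n))_{n≥1} be a sequence in a normed algebra-like structure with bracket {·,·} satisfying ‖{u,v}‖ ≤ M‖u‖‖v‖, defined by the recursion z(1) = f + g and (n+1)z(n+1) = (1/2){f−g, z(n)} + Σ_{p≥1, 2p≤n} (B_{2p}/(2p)!) Σ_{k_1+...+k_{2p}=n, k_i>0} {z(k_1),{...,{z(k_{2p}), f+g}...}}. Let α = max{‖f‖,‖g‖} and let γ(n) be the majorant coefficients (γ(1)=1, (n+1)γ(n+1) = (1/2)γ(n) + Σ_{p≥1,2p≤n} (|B_{2p}|/(2p)!) Σ_{k_1+...+k_{2p}=n} γ(k_1)⋯γ(k_{2p})). Then ‖z(n)‖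 ≤ M^{n−1}(2α)^n γ(n) for all n ≥ 1. -/
/-- The nested bracket `{z(k₁),{...,{z(k_m), tail}...}}`. -/
def nestFold {F : Type*} (br : F → F → F) {m : ℕ} (k : Fin m → ℕ) (z : ℕ → F)
    (tail : F) : F :=
  (List.ofFn (fun i => z (k i))).foldr br tail

private lemma nest_bound {F : Type*} [NormedAddCommGroup F]
    (br : F → F → F) (M : ℝ) (hM : 0 ≤ M)
    (hbr : ∀ u v : F, ‖br u v‖ ≤ M * ‖u‖ * ‖v‖) (z : ℕ → F) (c : ℕ → ℝ) :
    ∀ m : ℕ, ∀ k : Fin m → ℕ, (∀ i, ‖z (k i)‖ ≤ c (k i)) → ∀ tail : F,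
      ‖nestFold br k z tail‖ ≤ M ^ m * (∏ i, c (k i)) * ‖tail‖ := by
  intro m
  induction m with
  | zero => intro k hk tail; simp [nestFold]
  | succ m ihm =>
    intro k hk tail
    have h0 : nestFold br k z tail
        = br (z (k 0)) (nestFold br (fun i : Fin m => k i.succ) z tail) := by
      simp [nestFold, List.ofFn_succ]
    rw [h0]
    have h1 := ihm (fun i => k i.succ) (fun i => hk i.succ) tail
    have hc0 : (0:ℝ) ≤ c (k 0) := le_trans (norm_nonneg _) (hk 0)
    calc ‖br (z (k 0)) (nestFold br (fun i : Fin m => k i.succ) z tail)‖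
        ≤ M * ‖z (k 0)‖ * ‖nestFold br (fun i : Fin m => k i.succ) z tail‖ := hbr _ _
      _ ≤ M * c (k 0) * (M ^ m * (∏ i, c ((fun i : Fin m => k i.succ) i)) * ‖tail‖) :=
          mul_le_mul (mul_le_mul_of_nonneg_left (hk 0) hM) h1 (norm_nonneg _)
            (mul_nonneg hM hc0)
      _ = M ^ (m+1) * (∏ i : Fin (m+1), c (k i)) * ‖tail‖ := by
          rw [Fin.prod_univ_succ]; ring

/-- method of majorants: if `(z(n))` satisfies the
Baker–Campbell–Hausdorff recursion with an abstract bracket satisfying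
`‖{u,v}‖ ≤ M‖u‖‖v‖`, and `γ` are the majorant coefficients, then
`‖z(n)‖ ≤ M^{n−1} (2α)^n γ(n)` with `α = max{‖f‖,‖g‖}`. -/
theorem stmt_5 {F : Type*} [NormedAddCommGroup F] [NormedSpace ℝ F]
    (br : F → F → F) (M : ℝ) (hM : 0 < M)
    (hbr : ∀ u v : F, ‖br u v‖ ≤ M * ‖u‖ * ‖v‖)
    (f g : F) (z : ℕ → F) (γ : ℕ → ℝ)
    (hz1 : z 1 = f + g)
    (hzrec : ∀ n : ℕ, 1 ≤ n →
      ((n : ℝ) + 1) • z (n + 1) =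
        (1 / 2 : ℝ) • br (f - g) (z n) +
          ∑ p ∈ Finset.Icc 1 (n / 2),
            (((bernoulli (2 * p) : ℚ) : ℝ) / (Nat.factorial (2 * p) : ℝ)) •
              ∑ k ∈ comps (2 * p) n, nestFold br k z (f + g))
    (hγ1 : γ 1 = 1)
    (hγrec : ∀ n : ℕ, 1 ≤ n →
      ((n : ℝ) + 1) * γ (n + 1) =
        (1 / 2) * γ n +
          ∑ p ∈ Finset.Icc 1 (n / 2),
            |((bernoulli (2 * p) : ℚ) : ℝ)| / (Nat.factorial (2 * p) : ℝ) *
              ∑ k ∈ comps (2 * p) n, ∏ i, γ (k i)) :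
    ∀ n : ℕ, 1 ≤ n →
      ‖z n‖ ≤ M ^ (n - 1) * (2 * max ‖f‖ ‖g‖) ^ n * γ n := by
  set α := max ‖f‖ ‖g‖ with hαdef
  have hα0 : (0:ℝ) ≤ α := le_trans (norm_nonneg f) (le_max_left _ _)
  have h2α : (0:ℝ) ≤ 2 * α := by positivity
  have hfg : ‖f + g‖ ≤ 2 * α := by
    calc ‖f + g‖ ≤ ‖f‖ + ‖g‖ := norm_add_le _ _
      _ ≤ 2 * α := by rw [two_mul]; exact add_le_add (le_max_left _ _) (le_max_right _ _)
  have hfg' : ‖f - g‖ ≤ 2 * α := by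
    calc ‖f - g‖ ≤ ‖f‖ + ‖g‖ := norm_sub_le _ _
      _ ≤ 2 * α := by rw [two_mul]; exact add_le_add (le_max_left _ _) (le_max_right _ _)
  have hM0 : (0:ℝ) ≤ M := hM.le
  intro n
  induction n using Nat.strong_induction_on with
  | _ n ih =>
  intro hn
  obtain ⟨m, rfl⟩ : ∃ m, n = m + 1 := ⟨n - 1, by omega⟩
  rcases Nat.eq_zero_or_pos m with rfl | hm
  · simpa [hz1, hγ1] using hfg
  · -- set c : the majorant function
    set c : ℕ → ℝ := fun j => M ^ (j - 1) * (2 * α) ^ j * γ j with hcdef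
    have hc_nonneg : ∀ j, 1 ≤ j → j < m + 1 → (0:ℝ) ≤ c j := fun j hj hjm =>
      le_trans (norm_nonneg _) (ih j hjm hj)
    -- bound each nested bracket summand
    have hnest : ∀ p ∈ Finset.Icc 1 (m / 2), ∀ k ∈ comps (2 * p) m,
        ‖nestFold br k z (f + g)‖ ≤ M ^ m * (2 * α) ^ (m + 1) * ∏ i, γ (k i) := by
      intro p hp k hk
      rw [comps, Finset.mem_filter] at hk
      obtain ⟨-, hkpos, hksum⟩ := hk
      have hp1 : 1 ≤ p := (Finset.mem_Icc.mp hp).1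
      have hcard : (0:ℕ) < 2 * p := by omega
      have hki_le : ∀ i, k i < m + 1 := by
        intro i
        have : k i ≤ ∑ j, k j :=
          Finset.single_le_sum (fun j _ => Nat.zero_le _) (Finset.mem_univ i)
        omega
      have hkc : ∀ i, ‖z (k i)‖ ≤ c (k i) := fun i => ih (k i) (hki_le i) (hkpos i)
      have h1 := nest_bound br M hM0 hbr z c (2 * p) k hkc (f + g)
      -- compute the product
      have hsum1 : (∑ i, (k i - 1)) + 2 * p = m := by
        have : ∑ i, ((k i - 1) + 1) = ∑ i, k i :=
          Finset.sum_congr rfl (fun i _ => by have := hkpos i; omega)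
        rw [Finset.sum_add_distrib, Finset.sum_const, Finset.card_univ,
          Fintype.card_fin, smul_eq_mul, mul_one] at this
        omega
      have hprod : (∏ i, c (k i))
          = M ^ (∑ i, (k i - 1)) * (2 * α) ^ m * ∏ i, γ (k i) := by
        simp only [hcdef]
        rw [Finset.prod_mul_distrib, Finset.prod_mul_distrib,
          Finset.prod_pow_eq_pow_sum, Finset.prod_pow_eq_pow_sum, hksum]
      have hprod_nonneg : (0:ℝ) ≤ ∏ i, c (k i) :=
        Finset.prod_nonneg (fun i _ => le_trans (norm_nonneg _) (hkc i))
      calc ‖nestFold br k z (f + g)‖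
          ≤ M ^ (2 * p) * (∏ i, c (k i)) * ‖f + g‖ := h1
        _ ≤ M ^ (2 * p) * (∏ i, c (k i)) * (2 * α) := by
            apply mul_le_mul_of_nonneg_left hfg
            exact mul_nonneg (pow_nonneg hM0 _) hprod_nonneg
        _ = M ^ m * (2 * α) ^ (m + 1) * ∏ i, γ (k i) := by
            rw [hprod, ← hsum1, pow_add, pow_succ]
            ring
    -- bound the sum over compositions
    have hSp : ∀ p ∈ Finset.Icc 1 (m / 2),
        ‖∑ k ∈ comps (2 * p) m, nestFold br k z (f + g)‖
          ≤ M ^ m * (2 * α) ^ (m + 1) * ∑ k ∈ comps (2 * p) m, ∏ i, γ (k i) := by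
      intro p hp
      rw [Finset.mul_sum]
      exact norm_sum_le_of_le _ (fun k hk => hnest p hp k hk)
    -- the key inequality
    have hrec := hzrec m hm
    have hγr := hγrec m hm
    have hmain : ((m:ℝ) + 1) * ‖z (m + 1)‖
        ≤ M ^ m * (2 * α) ^ (m + 1) * (((m:ℝ) + 1) * γ (m + 1)) := by
      have hnorm : ((m:ℝ) + 1) * ‖z (m + 1)‖ = ‖((m:ℝ) + 1) • z (m + 1)‖ := by
        rw [norm_smul, Real.norm_eq_abs, abs_of_pos (by positivity)]
      rw [hnorm, hrec, hγr]
      calc ‖(1 / 2 : ℝ) • br (f - g) (z m) +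
              ∑ p ∈ Finset.Icc 1 (m / 2),
                (((bernoulli (2 * p) : ℚ) : ℝ) / (Nat.factorial (2 * p) : ℝ)) •
                  ∑ k ∈ comps (2 * p) m, nestFold br k z (f + g)‖
          ≤ ‖(1 / 2 : ℝ) • br (f - g) (z m)‖ +
              ‖∑ p ∈ Finset.Icc 1 (m / 2),
                (((bernoulli (2 * p) : ℚ) : ℝ) / (Nat.factorial (2 * p) : ℝ)) •
                  ∑ k ∈ comps (2 * p) m, nestFold br k z (f + g)‖ := norm_add_le _ _
        _ ≤ M ^ m * (2 * α) ^ (m + 1) * ((1 / 2) * γ m) +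
              M ^ m * (2 * α) ^ (m + 1) *
                (∑ p ∈ Finset.Icc 1 (m / 2),
                  |((bernoulli (2 * p) : ℚ) : ℝ)| / (Nat.factorial (2 * p) : ℝ) *
                    ∑ k ∈ comps (2 * p) m, ∏ i, γ (k i)) := by
            apply add_le_add
            · -- first term
              rw [norm_smul, Real.norm_eq_abs]
              have hzm : ‖z m‖ ≤ M ^ (m - 1) * (2 * α) ^ m * γ m :=
                ih m (by omega) hm
              have hbm := hbr (f - g) (z m)
              have h2 : ‖br (f - g) (z m)‖ ≤ M * (2 * α) * (M ^ (m - 1) * (2 * α) ^ m * γ m) := by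
                calc ‖br (f - g) (z m)‖ ≤ M * ‖f - g‖ * ‖z m‖ := hbm
                  _ ≤ M * (2 * α) * (M ^ (m - 1) * (2 * α) ^ m * γ m) :=
                      mul_le_mul (mul_le_mul_of_nonneg_left hfg' hM0) hzm (norm_nonneg _)
                        (mul_nonneg hM0 h2α)
              have habs : |(1 / 2 : ℝ)| = 1 / 2 := by norm_num
              rw [habs]
              have hMm : M * M ^ (m - 1) = M ^ m := by
                conv_rhs => rw [show m = (m - 1) + 1 by omega]
                rw [pow_succ]; ring
              calc (1 / 2 : ℝ) * ‖br (f - g) (z m)‖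
                  ≤ (1 / 2 : ℝ) * (M * (2 * α) * (M ^ (m - 1) * (2 * α) ^ m * γ m)) := by
                    linarith
                _ = M ^ m * (2 * α) ^ (m + 1) * ((1 / 2) * γ m) := by
                    rw [← hMm, pow_succ]; ring
            · -- sum term
              rw [Finset.mul_sum]
              apply norm_sum_le_of_le
              intro p hp
              rw [norm_smul, Real.norm_eq_abs, abs_div, abs_of_nonneg
                (by positivity : (0:ℝ) ≤ (Nat.factorial (2 * p) : ℝ))]
              calc |((bernoulli (2 * p) : ℚ) : ℝ)| / (Nat.factorial (2 * p) : ℝ) *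
                    ‖∑ k ∈ comps (2 * p) m, nestFold br k z (f + g)‖
                  ≤ |((bernoulli (2 * p) : ℚ) : ℝ)| / (Nat.factorial (2 * p) : ℝ) *
                    (M ^ m * (2 * α) ^ (m + 1) * ∑ k ∈ comps (2 * p) m, ∏ i, γ (k i)) :=
                    mul_le_mul_of_nonneg_left (hSp p hp) (by positivity)
                _ = M ^ m * (2 * α) ^ (m + 1) *
                    (|((bernoulli (2 * p) : ℚ) : ℝ)| / (Nat.factorial (2 * p) : ℝ) *
                      ∑ k ∈ comps (2 * p) m, ∏ i, γ (k i)) := by ring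
        _ = M ^ m * (2 * α) ^ (m + 1) *
              ((1 / 2) * γ m +
                ∑ p ∈ Finset.Icc 1 (m / 2),
                  |((bernoulli (2 * p) : ℚ) : ℝ)| / (Nat.factorial (2 * p) : ℝ) *
                    ∑ k ∈ comps (2 * p) m, ∏ i, γ (k i)) := by ring
    -- conclude
    have hmpos : (0:ℝ) < (m:ℝ) + 1 := by positivity
    have : ‖z (m + 1)‖ ≤ M ^ m * (2 * α) ^ (m + 1) * γ (m + 1) := by
      have := hmain
      nlinarith [hmain]
    simpa using this
end
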